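/- Let S = MC({S_i}_{i∈I}, K) be the multicomposition of a composable family {S_i}_{i∈I} with interfaces H = {h_i}_{i∈I} and connection policy K complying with a connection model CM, and let s = (q⃗, w⃗) be a reachable configuration of S. Then for each i ∈ I: if the local state q_{h_i} of the gateway for h_i is not one of the fresh intermediate gateway states in Q̂_{h_i}, then the projection s|_i is a reachable configuration of S_i. -/

import Mathlib

namespace CFSM

/-- Direction of a communication action: output (`!`) or input (`?`). -/
inductive Dir : Type where
  | out : Dir
  | inp : Dir
deriving DecidableEq

instance instFintypeDir : Fintype Dir :=
  ⟨{Dir.out, Dir.inp}, fun x => by cases x <;> simp⟩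

/-- An action `pq!a` (output) or `pq?a` (input) over participants `P` and messages `A`:
`snd` is the sender `p`, `rcv` the receiver `q`, `msg` the message `a`. -/
structure Act (P : Type) (A : Type) : Type where
  snd : P
  rcv : P
  dir : Dir
  msg : A

instance {P A : Type} [Finite P] [Finite A] : Finite (Act P A) :=
  Finite.of_injective (fun l => (l.snd, l.rcv, l.dir, l.msg))
    (fun a b h => by
      cases a; cases b
      simp only [Prod.mk.injEq] at h
      obtain ⟨h1, h2, h3, h4⟩ := h
      subst h1; subst h2; subst h3; subst h4; rfl)

/-- The subject of an action: the sender of an output, the receiver of an input. -/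
def Act.subject {P A : Type} (l : Act P A) : P :=
  match l.dir with
  | .out => l.snd
  | .inp => l.rcv

/-- A communicating system over participants `P` and messages `A`:
one machine (state type, initial state and transition relation) per participant. -/
structure CS (P : Type) (A : Type) : Type 1 where
  St : P → Type
  init : ∀ p, St p
  delta : ∀ p, Set (St p × Act P A × St p)

/-- All actions of the machine of participant `p` have subject `p`
(the name of the machine) and distinct endpoints. -/
def CS.WellFormed {P A : Type} (S : CS P A) : Prop :=
  ∀ p t, t ∈ S.delta p → ((t.2.1 : Act P A).subject = p ∧ t.2.1.snd ≠ t.2.1.rcv)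

/-- A configuration: a local state for each machine and a FIFO buffer
for each ordered pair of participants. -/
structure Config {P A : Type} (S : CS P A) : Type where
  st : ∀ p, S.St p
  ch : P → P → List A

/-- The initial configuration: all machines in their initial state, all channels empty. -/
def CS.initConfig {P A : Type} (S : CS P A) : Config S :=
  ⟨S.init, fun _ _ => []⟩

/-- The labelled transition relation between configurations. -/
def StepL {P A : Type} (S : CS P A) (c : Config S) (l : Act P A) (c' : Config S) : Prop :=
  match l.dir with
  | .out =>
      (c.st l.snd, l, c'.st l.snd) ∈ S.delta l.snd ∧
      (∀ p, p ≠ l.snd → c'.st p = c.st p) ∧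
      c'.ch l.snd l.rcv = c.ch l.snd l.rcv ++ [l.msg] ∧
      (∀ p q, (p, q) ≠ (l.snd, l.rcv) → c'.ch p q = c.ch p q)
  | .inp =>
      (c.st l.rcv, l, c'.st l.rcv) ∈ S.delta l.rcv ∧
      (∀ p, p ≠ l.rcv → c'.st p = c.st p) ∧
      c.ch l.snd l.rcv = l.msg :: c'.ch l.snd l.rcv ∧
      (∀ p q, (p, q) ≠ (l.snd, l.rcv) → c'.ch p q = c.ch p q)

/-- Unlabelled transition relation. -/
def Step {P A : Type} (S : CS P A) (c c' : Config S) : Prop :=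
  ∃ l, StepL S c l c'

/-- Reachability between configurations. -/
def Reach {P A : Type} (S : CS P A) : Config S → Config S → Prop :=
  Relation.ReflTransGen (Step S)

/-- The set of configurations reachable from the initial configuration. -/
def RC {P A : Type} (S : CS P A) : Set (Config S) :=
  {c | Reach S S.initConfig c}

/-- A local state is final if it has no outgoing transition. -/
def FinalSt {Q P A : Type} (δ : Set (Q × Act P A × Q)) (q : Q) : Prop :=
  ∀ l q', (q, l, q') ∉ δ

/-- A local state is receiving if it is not final and all its outgoing
transitions are labelled with input actions. -/
def ReceivingSt {Q P A : Type} (δ : Set (Q × Act P A × Q)) (q : Q) : Prop :=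
  (∃ l q', (q, l, q') ∈ δ) ∧ ∀ l q', (q, l, q') ∈ δ → (l : Act P A).dir = Dir.inp

/-- A local state is mixed if it has at least one outgoing output-labelled
transition and at least one outgoing input-labelled transition. -/
def MixedSt {Q P A : Type} (δ : Set (Q × Act P A × Q)) (q : Q) : Prop :=
  (∃ l q', (q, l, q') ∈ δ ∧ (l : Act P A).dir = Dir.out) ∧
  (∃ l q', (q, l, q') ∈ δ ∧ (l : Act P A).dir = Dir.inp)

/-- A machine has no mixed states. -/
def NoMixed {Q P A : Type} (δ : Set (Q × Act P A × Q)) : Prop :=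
  ∀ q, ¬ MixedSt δ q

/-- Deadlock configuration: all channels empty but all machines in receiving states. -/
def DeadlockConfig {P A : Type} (S : CS P A) (c : Config S) : Prop :=
  (∀ p q, c.ch p q = []) ∧ ∀ p, ReceivingSt (S.delta p) (c.st p)

def DeadlockFree {P A : Type} (S : CS P A) : Prop :=
  ∀ c ∈ RC S, ¬ DeadlockConfig S c

/-- Orphan-message configuration: all machines final but some channel nonempty. -/
def OrphanConfig {P A : Type} (S : CS P A) (c : Config S) : Prop :=
  (∀ p, FinalSt (S.delta p) (c.st p)) ∧ ∃ p q, c.ch p q ≠ []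

def OrphanFree {P A : Type} (S : CS P A) : Prop :=
  ∀ c ∈ RC S, ¬ OrphanConfig S c

/-- Unspecified reception configuration: some machine `r` is in a receiving state and,
for every input transition of `r`, the corresponding channel is nonempty with a
first element different from the expected message. -/
def URConfig {P A : Type} (S : CS P A) (c : Config S) : Prop :=
  ∃ r, ReceivingSt (S.delta r) (c.st r) ∧
    ∀ s a q', (c.st r, Act.mk s r Dir.inp a, q') ∈ S.delta r →
      (c.ch s r ≠ [] ∧ ¬ ∃ w, c.ch s r = a :: w)

def ReceptionErrorFree {P A : Type} (S : CS P A) : Prop :=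
  ∀ c ∈ RC S, ¬ URConfig S c

/-- Progress: every reachable configuration has an outgoing transition or all
machines are in final states. -/
def ProgressProp {P A : Type} (S : CS P A) : Prop :=
  ∀ c ∈ RC S, (∃ c', Step S c c') ∨ ∀ p, FinalSt (S.delta p) (c.st p)

/-- `p`-lock configuration: `p` is in a receiving state and never occurs as the
subject of an action in any transition sequence from `c`. -/
def PLockConfig {P A : Type} (S : CS P A) (c : Config S) (p : P) : Prop :=
  ReceivingSt (S.delta p) (c.st p) ∧
  ∀ c1 l c2, Reach S c c1 → StepL S c1 l c2 → l.subject ≠ p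

def LockFree {P A : Type} (S : CS P A) : Prop :=
  ∀ c ∈ RC S, ∀ p, ¬ PLockConfig S c p

section Composition

variable {I : Type} {P : I → Type} {A : Type}

/-- Messages occurring in input actions of the machine of `p`. -/
def inMsgs {Pp A : Type} (S : CS Pp A) (p : Pp) : Set A :=
  {a | ∃ q s q', (q, Act.mk s p Dir.inp a, q') ∈ S.delta p}

/-- Messages occurring in output actions of the machine of `p`. -/
def outMsgs {Pp A : Type} (S : CS Pp A) (p : Pp) : Set A :=
  {a | ∃ q r q', (q, Act.mk p r Dir.out a, q') ∈ S.delta p}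

/-- `CM` is a connection model for the interfaces `hh i` of the family `S`
(the interface `h_i` is represented by its index `i`). -/
def IsConnModel (S : ∀ i, CS (P i) A) (hh : ∀ i, P i) (CM : Set (I × A × I)) : Prop :=
  ∀ i a,
    (a ∈ inMsgs (S i) (hh i) →
      ∃ j, j ≠ i ∧ a ∈ outMsgs (S j) (hh j) ∧ (i, a, j) ∈ CM) ∧
    (a ∈ outMsgs (S i) (hh i) →
      ∃ j, j ≠ i ∧ a ∈ inMsgs (S j) (hh j) ∧ (j, a, i) ∈ CM)

/-- `CM` is a strong connection model: additionally the connecting partner is unique. -/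
def IsStrongConnModel (S : ∀ i, CS (P i) A) (hh : ∀ i, P i) (CM : Set (I × A × I)) : Prop :=
  IsConnModel S hh CM ∧
  ∀ i a,
    (a ∈ inMsgs (S i) (hh i) → ∃! j, (i, a, j) ∈ CM) ∧
    (a ∈ outMsgs (S i) (hh i) → ∃! j, (j, a, i) ∈ CM)

/-- Conditions (*) and (**) for a candidate transition relation `d` of the local
connection policy of interface `hh i` (the name `k_i` is represented by `i`). -/
def PolicySat (S : ∀ i, CS (P i) A) (hh : ∀ i, P i) (CM : Set (I × A × I)) (i : I)
    (d : Set ((S i).St (hh i) × Act I A × (S i).St (hh i))) : Prop :=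
  (∀ q r a q', (q, Act.mk r (hh i) Dir.inp a, q') ∈ (S i).delta (hh i) →
      ∃ j, j ≠ i ∧ (i, a, j) ∈ CM ∧ (q, Act.mk i j Dir.out a, q') ∈ d) ∧
  (∀ q r a q', (q, Act.mk (hh i) r Dir.out a, q') ∈ (S i).delta (hh i) →
      ∃ j, j ≠ i ∧ (j, a, i) ∈ CM ∧ (q, Act.mk j i Dir.inp a, q') ∈ d)

/-- `d` belongs to the local connection policy set `IS(M_{h_i}, CM)`:
it is a minimal relation satisfying (*) and (**).  (The states `q̇` of the
policy machine are identified with the states `q` of `M_{h_i}`.) -/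
def InIS (S : ∀ i, CS (P i) A) (hh : ∀ i, P i) (CM : Set (I × A × I)) (i : I)
    (d : Set ((S i).St (hh i) × Act I A × (S i).St (hh i))) : Prop :=
  PolicySat S hh CM i d ∧ ∀ d', d' ⊆ d → PolicySat S hh CM i d' → d' = d

/-- The communicating system (over the participant type `I` of names `k_i`)
determined by the family of transition relations `Kd` of a connection policy. -/
def policyCS (S : ∀ i, CS (P i) A) (hh : ∀ i, P i)
    (Kd : ∀ i, Set ((S i).St (hh i) × Act I A × (S i).St (hh i))) : CS I A where
  St := fun i => (S i).St (hh i)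
  init := fun i => (S i).init (hh i)
  delta := Kd

/-- `Kd` is a connection policy for the interfaces `hh` complying with `CM`. -/
def IsConnPolicy (S : ∀ i, CS (P i) A) (hh : ∀ i, P i) (CM : Set (I × A × I))
    (Kd : ∀ i, Set ((S i).St (hh i) × Act I A × (S i).St (hh i))) : Prop :=
  ∀ i, InIS S hh CM i (Kd i)

/-- States of the gateway for interface `hh i`: the original states plus one
fresh state per transition of `M_{h_i}`. -/
abbrev GWState (S : ∀ i, CS (P i) A) (hh : ∀ i, P i) (i : I) : Type :=
  (S i).St (hh i) ⊕ ((S i).St (hh i) × Act (P i) A × (S i).St (hh i))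

/-- Lifting of a local action of system `i` to the composed participant type. -/
def liftAct (i : I) (l : Act (P i) A) : Act ((j : I) × P j) A :=
  Act.mk ⟨i, l.snd⟩ ⟨i, l.rcv⟩ l.dir l.msg

/-- Transition relation of the gateway `M_{h_i} ⟲ M_{k_i}`. -/
def GWdelta (S : ∀ i, CS (P i) A) (hh : ∀ i, P i)
    (Kd : ∀ i, Set ((S i).St (hh i) × Act I A × (S i).St (hh i))) (i : I) :
    Set (GWState S hh i × Act ((j : I) × P j) A × GWState S hh i) :=
  {x | ∃ q a q',
    (∃ s r, (q, Act.mk (hh i) s Dir.out a, q') ∈ (S i).delta (hh i) ∧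
        (q, Act.mk r i Dir.inp a, q') ∈ Kd i ∧
        (x = (Sum.inl q, Act.mk ⟨r, hh r⟩ ⟨i, hh i⟩ Dir.inp a,
              Sum.inr (q, Act.mk (hh i) s Dir.out a, q')) ∨
         x = (Sum.inr (q, Act.mk (hh i) s Dir.out a, q'),
              Act.mk ⟨i, hh i⟩ ⟨i, s⟩ Dir.out a, Sum.inl q'))) ∨
    (∃ s r, (q, Act.mk s (hh i) Dir.inp a, q') ∈ (S i).delta (hh i) ∧
        (q, Act.mk i r Dir.out a, q') ∈ Kd i ∧
        (x = (Sum.inl q, Act.mk ⟨i, s⟩ ⟨i, hh i⟩ Dir.inp a,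
              Sum.inr (q, Act.mk s (hh i) Dir.inp a, q')) ∨
         x = (Sum.inr (q, Act.mk s (hh i) Dir.inp a, q'),
              Act.mk ⟨i, hh i⟩ ⟨r, hh r⟩ Dir.out a, Sum.inl q')))}

open Classical in
/-- State type of the machine of participant `⟨i, p⟩` in the multicomposition:
the gateway state type if `p` is the interface of system `i`, the original
state type otherwise. -/
noncomputable def MCSt (S : ∀ i, CS (P i) A) (hh : ∀ i, P i) (x : (i : I) × P i) : Type :=
  if x.2 = hh x.1 then GWState S hh x.1 else (S x.1).St x.2

/-- The multicomposition `MC({S_i}, K)`: all machines of the single systems,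
with the machine of each interface `hh i` replaced by its gateway. -/
noncomputable def MC (S : ∀ i, CS (P i) A) (hh : ∀ i, P i)
    (Kd : ∀ i, Set ((S i).St (hh i) × Act I A × (S i).St (hh i))) :
    CS ((i : I) × P i) A where
  St := MCSt S hh
  init := fun x => by
    by_cases hp : x.2 = hh x.1
    · have h : MCSt S hh x = GWState S hh x.1 := by simp [MCSt, hp]
      rw [h]; exact Sum.inl ((S x.1).init (hh x.1))
    · have h : MCSt S hh x = (S x.1).St x.2 := by simp [MCSt, hp]
      rw [h]; exact (S x.1).init x.2
  delta := fun x => by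
    by_cases hp : x.2 = hh x.1
    · have h : MCSt S hh x = GWState S hh x.1 := by simp [MCSt, hp]
      rw [h]; exact GWdelta S hh Kd x.1
    · have h : MCSt S hh x = (S x.1).St x.2 := by simp [MCSt, hp]
      rw [h]
      exact {t | ∃ q l q', (q, l, q') ∈ (S x.1).delta x.2 ∧ t = (q, liftAct x.1 l, q')}

/-- The state of the gateway of interface `hh i` in a configuration of the
multicomposition, as an element of `GWState`. -/
noncomputable def toGW (S : ∀ i, CS (P i) A) (hh : ∀ i, P i) (i : I)
    (x : MCSt S hh ⟨i, hh i⟩) : GWState S hh i :=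
  cast (by simp [MCSt]) x

/-- The state of a non-interface participant in a configuration of the
multicomposition, as an element of its original state type. -/
noncomputable def toLoc (S : ∀ i, CS (P i) A) (hh : ∀ i, P i) {i : I} {p : P i}
    (hp : p ≠ hh i) (x : MCSt S hh ⟨i, p⟩) : (S i).St p :=
  cast (by simp [MCSt, hp]) x

/-- Projection of a configuration of the multicomposition to system `S i`,
assuming the gateway state of `hh i` is not a fresh intermediate state
(i.e. it is of the form `Sum.inl q`). -/
noncomputable def projSys (S : ∀ i, CS (P i) A) (hh : ∀ i, P i)
    (Kd : ∀ i, Set ((S i).St (hh i) × Act I A × (S i).St (hh i)))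
    (i : I) (s : Config (MC S hh Kd))
    (hq : ∃ q, toGW S hh i (s.st ⟨i, hh i⟩) = Sum.inl q) : Config (S i) where
  st := fun p => by
    by_cases hp : p = hh i
    · rw [hp]; exact hq.choose
    · exact toLoc S hh hp (s.st ⟨i, p⟩)
  ch := fun p q => s.ch ⟨i, p⟩ ⟨i, q⟩

/-- Projection of a configuration of the multicomposition to the connection
policy `K`, assuming no gateway is in a fresh intermediate state. -/
noncomputable def projPolicy (S : ∀ i, CS (P i) A) (hh : ∀ i, P i)
    (Kd : ∀ i, Set ((S i).St (hh i) × Act I A × (S i).St (hh i)))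
    (s : Config (MC S hh Kd))
    (hq : ∀ i, ∃ q, toGW S hh i (s.st ⟨i, hh i⟩) = Sum.inl q) :
    Config (policyCS S hh Kd) where
  st := fun i => (hq i).choose
  ch := fun i j => s.ch ⟨i, hh i⟩ ⟨j, hh j⟩

end Composition

end CFSM

/-!
A configuration `s` of the multicomposition determines a configuration of `S i`: the local
states and internal channels of `S i`, with the gateway of `h_i` replaced by the state of
`M_{h_i}` it has committed to. Every step of the multicomposition is either invisible in `S i`
or a single step of `S i`. Steps of other systems touch no internal channel of `S i`; a gateway
splits each transition of `M_{h_i}` into two halves, and exactly one half acts on `S i`, the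
other one using a channel to a different interface (a connection policy never connects an
interface to itself). Hence the simulated configuration is reachable, and it is the projection
whenever the gateway is not in an intermediate state.
-/

namespace CFSM

section Transitions

variable {Q A : Type} {T : CS Q A} {c c' : Config T} {l : Act Q A}

@[ext]
theorem Config.ext (hst : c.st = c'.st) (hch : c.ch = c'.ch) : c = c' := by
  cases c; cases c'; cases hst; cases hch; rfl

theorem Act.subject_eq_snd_or_rcv (l : Act Q A) : l.subject = l.snd ∨ l.subject = l.rcv := by
  obtain ⟨_, _, _ | _, _⟩ := l
  exacts [Or.inl rfl, Or.inr rfl]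

theorem StepL.mem_delta (h : StepL T c l c') :
    (c.st l.subject, l, c'.st l.subject) ∈ T.delta l.subject := by
  obtain ⟨_, _, _ | _, _⟩ := l
  exacts [h.1, h.1]

theorem StepL.st_eq_of_ne (h : StepL T c l c') {p : Q} (hp : p ≠ l.subject) :
    c'.st p = c.st p := by
  obtain ⟨_, _, _ | _, _⟩ := l
  exacts [h.2.1 p hp, h.2.1 p hp]

theorem StepL.ch_eq_of_ne (h : StepL T c l c') {p q : Q} (hpq : (p, q) ≠ (l.snd, l.rcv)) :
    c'.ch p q = c.ch p q := by
  obtain ⟨_, _, _ | _, _⟩ := l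
  exacts [h.2.2.2 p q hpq, h.2.2.2 p q hpq]

end Transitions

variable {I : Type} {P : I → Type} {A : Type}

theorem StepL.ch_eq_of_fst_ne {T : CS ((j : I) × P j) A} {c c' : Config T}
    {l : Act ((j : I) × P j) A} (h : StepL T c l c') {i : I} (hi : l.snd.1 ≠ i ∨ l.rcv.1 ≠ i)
    (p r : P i) : c'.ch ⟨i, p⟩ ⟨i, r⟩ = c.ch ⟨i, p⟩ ⟨i, r⟩ := by
  refine h.ch_eq_of_ne fun he => ?_
  simp only [Prod.mk.injEq] at he
  obtain ⟨hp, hr⟩ := he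
  exact hi.elim (· (by rw [← hp])) (· (by rw [← hr]))

theorem liftAct_subject (i : I) (l : Act (P i) A) : (liftAct i l).subject = ⟨i, l.subject⟩ := by
  obtain ⟨_, _, _ | _, _⟩ := l <;> rfl

theorem mem_mpr_iff {T G C : Type} (e : T = G) (h : Set (T × C × T) = Set (G × C × G))
    (s : Set (G × C × G)) (x y : T) (l : C) :
    (x, l, y) ∈ h.mpr s ↔ (cast e x, l, cast e y) ∈ s := by
  subst e; rfl

section Gateway

variable (S : ∀ i, CS (P i) A) (hh : ∀ i, P i)
  (Kd : ∀ i, Set ((S i).St (hh i) × Act I A × (S i).St (hh i)))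

/-- The state of `M_{h_i}` the gateway stands for. In the intermediate state of a transition `t`,
the step `t` counts as taken iff `t` is an input: only then has the gateway already acted
inside `S i`. -/
def committedSt {i : I} : GWState S hh i → (S i).St (hh i)
  | .inl q => q
  | .inr (q, l, q') =>
    match l.dir with
    | .out => q
    | .inp => q'

open Classical in
noncomputable def simConfig (i : I) (s : Config (MC S hh Kd)) : Config (S i) where
  st p :=
    if hp : p = hh i then hp ▸ committedSt S hh (toGW S hh i (s.st ⟨i, hh i⟩))
    else toLoc S hh hp (s.st ⟨i, p⟩)
  ch p r := s.ch ⟨i, p⟩ ⟨i, r⟩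

variable {S hh Kd}

theorem mem_delta_gateway {i : I} {x y : MCSt S hh ⟨i, hh i⟩} {l : Act ((j : I) × P j) A} :
    (x, l, y) ∈ (MC S hh Kd).delta ⟨i, hh i⟩ ↔
      (toGW S hh i x, l, toGW S hh i y) ∈ GWdelta S hh Kd i := by
  simp only [MC, dif_pos]
  exact mem_mpr_iff _ _ _ _ _ _

theorem mem_delta_of_ne {i : I} {p : P i} (hp : p ≠ hh i) {x y : MCSt S hh ⟨i, p⟩}
    {l : Act ((j : I) × P j) A} :
    (x, l, y) ∈ (MC S hh Kd).delta ⟨i, p⟩ ↔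
      ∃ l₀, l = liftAct i l₀ ∧ (toLoc S hh hp x, l₀, toLoc S hh hp y) ∈ (S i).delta p := by
  simp only [MC, dif_neg hp]
  refine (mem_mpr_iff (by simp [MCSt, hp]) _ _ _ _ _).trans ?_
  constructor
  · rintro ⟨q, l₀, q', hδ, he⟩
    simp only [Prod.mk.injEq] at he
    obtain ⟨rfl, rfl, rfl⟩ := he
    exact ⟨l₀, rfl, hδ⟩
  · rintro ⟨l₀, rfl, hδ⟩
    exact ⟨_, l₀, _, hδ, rfl⟩

theorem toGW_init (i : I) :
    toGW S hh i ((MC S hh Kd).init ⟨i, hh i⟩) = Sum.inl ((S i).init (hh i)) := by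
  simp [MC, toGW]

theorem toLoc_init {i : I} {p : P i} (hp : p ≠ hh i) :
    toLoc S hh hp ((MC S hh Kd).init ⟨i, p⟩) = (S i).init p := by
  simp [MC, toLoc, hp]

theorem IsConnPolicy.snd_ne_rcv {CM : Set (I × A × I)} (hK : IsConnPolicy S hh CM Kd) {i : I}
    {t : (S i).St (hh i) × Act I A × (S i).St (hh i)} (ht : t ∈ Kd i) :
    t.2.1.snd ≠ t.2.1.rcv := by
  obtain ⟨⟨hin, hout⟩, hmin⟩ := hK i
  let d := {t ∈ Kd i | t.2.1.snd ≠ t.2.1.rcv}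
  have hsat : PolicySat S hh CM i d := by
    constructor
    · intro q r a q' hq
      obtain ⟨j, hji, hcm, hd⟩ := hin q r a q' hq
      exact ⟨j, hji, hcm, hd, Ne.symm hji⟩
    · intro q r a q' hq
      obtain ⟨j, hji, hcm, hd⟩ := hout q r a q' hq
      exact ⟨j, hji, hcm, hd, hji⟩
  -- By minimality, `Kd i` is its part with distinct endpoints, which still satisfies (*), (**).
  rw [← hmin d (fun _ h => h.1) hsat] at ht
  exact ht.2

section Simulation

variable {CM : Set (I × A × I)} {i : I} {s s' : Config (MC S hh Kd)}

theorem simConfig_st_self :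
    (simConfig S hh Kd i s).st (hh i) = committedSt S hh (toGW S hh i (s.st ⟨i, hh i⟩)) := by
  simp [simConfig]

theorem simConfig_st_of_ne {p : P i} (hp : p ≠ hh i) :
    (simConfig S hh Kd i s).st p = toLoc S hh hp (s.st ⟨i, p⟩) := by
  simp [simConfig, hp]

theorem simConfig_st_congr {p : P i} (h : s'.st ⟨i, p⟩ = s.st ⟨i, p⟩) :
    (simConfig S hh Kd i s').st p = (simConfig S hh Kd i s).st p := by
  by_cases hp : p = hh i
  · subst hp
    simp only [simConfig_st_self, h]
  · simp only [simConfig_st_of_ne hp, h]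

theorem simConfig_eq_of_frame
    (hgw : committedSt S hh (toGW S hh i (s'.st ⟨i, hh i⟩)) =
      committedSt S hh (toGW S hh i (s.st ⟨i, hh i⟩)))
    (hst : ∀ p, p ≠ hh i → s'.st ⟨i, p⟩ = s.st ⟨i, p⟩)
    (hch : ∀ p r, s'.ch ⟨i, p⟩ ⟨i, r⟩ = s.ch ⟨i, p⟩ ⟨i, r⟩) :
    simConfig S hh Kd i s' = simConfig S hh Kd i s := by
  ext1
  · funext p
    by_cases hp : p = hh i
    · subst hp
      rw [simConfig_st_self, simConfig_st_self, hgw]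
    · exact simConfig_st_congr (hst p hp)
  · funext p r
    exact hch p r

theorem stepL_simConfig {l : Act (P i) A} (hL : StepL (MC S hh Kd) s (liftAct i l) s')
    (hδ : ((simConfig S hh Kd i s).st l.subject, l, (simConfig S hh Kd i s').st l.subject) ∈
      (S i).delta l.subject) :
    StepL (S i) (simConfig S hh Kd i s) l (simConfig S hh Kd i s') := by
  obtain ⟨p, r, _ | _, a⟩ := l
  all_goals
    obtain ⟨-, hst, hch, hframe⟩ := hL
    refine ⟨hδ, fun q hq => simConfig_st_congr (hst _ ?_), hch, fun q q' hqq' => hframe _ _ ?_⟩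
    · simpa [liftAct, Act.subject] using hq
    · simpa [liftAct] using hqq'

theorem simConfig_reflGen_of_gateway (hK : IsConnPolicy S hh CM Kd)
    {L : Act ((j : I) × P j) A} (hL : StepL (MC S hh Kd) s L s')
    (hδ : (toGW S hh i (s.st ⟨i, hh i⟩), L, toGW S hh i (s'.st ⟨i, hh i⟩)) ∈ GWdelta S hh Kd i) :
    Relation.ReflGen (Step (S i)) (simConfig S hh Kd i s) (simConfig S hh Kd i s') := by
  obtain ⟨q, a, q', ⟨r, k, hd, hk, hx | hx⟩ | ⟨r, k, hd, hk, hx | hx⟩⟩ := hδ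
  all_goals
    simp only [Prod.mk.injEq] at hx
    obtain ⟨hg, rfl, hg'⟩ := hx
  -- In the first and last case the message crosses to another system (`k ≠ i`) and `S i` is
  -- untouched; in the other two the gateway performs its step of `M_{h_i}` inside `S i`.
  · have hki : k ≠ i := hK.snd_ne_rcv hk
    refine (simConfig_eq_of_frame (by rw [hg, hg']; rfl)
      (fun p hp => hL.st_eq_of_ne (by simpa [Act.subject] using hp))
      (hL.ch_eq_of_fst_ne (.inl hki))).symm ▸ .refl
  · refine .single ⟨Act.mk (hh i) r .out a, stepL_simConfig hL ?_⟩
    show ((simConfig S hh Kd i s).st (hh i), _, (simConfig S hh Kd i s').st (hh i)) ∈ _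
    rw [simConfig_st_self, simConfig_st_self, hg, hg']
    exact hd
  · refine .single ⟨Act.mk r (hh i) .inp a, stepL_simConfig hL ?_⟩
    show ((simConfig S hh Kd i s).st (hh i), _, (simConfig S hh Kd i s').st (hh i)) ∈ _
    rw [simConfig_st_self, simConfig_st_self, hg, hg']
    exact hd
  · have hik : i ≠ k := hK.snd_ne_rcv hk
    refine (simConfig_eq_of_frame (by rw [hg, hg']; rfl)
      (fun p hp => hL.st_eq_of_ne (by simpa [Act.subject] using hp))
      (hL.ch_eq_of_fst_ne (.inr hik.symm))).symm ▸ .refl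

theorem simConfig_reflGen_of_step (hK : IsConnPolicy S hh CM Kd) (h : Step (MC S hh Kd) s s') :
    Relation.ReflGen (Step (S i)) (simConfig S hh Kd i s) (simConfig S hh Kd i s') := by
  obtain ⟨L, hL⟩ := h
  rcases hx : L.subject with ⟨j, p⟩
  have hδ : (s.st ⟨j, p⟩, L, s'.st ⟨j, p⟩) ∈ (MC S hh Kd).delta ⟨j, p⟩ := hx ▸ hL.mem_delta
  by_cases hj : j = i
  · subst hj
    by_cases hp : p = hh j
    · subst hp
      exact simConfig_reflGen_of_gateway hK hL (mem_delta_gateway.1 hδ)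
    · obtain ⟨l, rfl, hl⟩ := (mem_delta_of_ne hp).1 hδ
      obtain rfl : l.subject = p := by simpa [liftAct_subject] using hx
      refine .single ⟨l, stepL_simConfig hL ?_⟩
      rwa [simConfig_st_of_ne hp, simConfig_st_of_ne hp]
  · have hframe (p : P i) : s'.st ⟨i, p⟩ = s.st ⟨i, p⟩ :=
      hL.st_eq_of_ne (by rw [hx]; exact fun he => hj (congrArg Sigma.fst he).symm)
    have hext : L.snd.1 ≠ i ∨ L.rcv.1 ≠ i := by
      rcases L.subject_eq_snd_or_rcv with he | he <;> rw [← he, hx] <;> simp [hj]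
    exact (simConfig_eq_of_frame (by rw [hframe]) (fun p _ => hframe p)
      (hL.ch_eq_of_fst_ne hext)).symm ▸ .refl

theorem reach_simConfig (hK : IsConnPolicy S hh CM Kd) (h : Reach (MC S hh Kd) s s') :
    Reach (S i) (simConfig S hh Kd i s) (simConfig S hh Kd i s') :=
  Relation.ReflTransGen.lift' (simConfig S hh Kd i)
    (fun _ _ hstep => (simConfig_reflGen_of_step hK hstep).to_reflTransGen) _ _ h

end Simulation

theorem simConfig_initConfig (i : I) :
    simConfig S hh Kd i (MC S hh Kd).initConfig = (S i).initConfig := by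
  ext1
  · funext p
    by_cases hp : p = hh i
    · subst hp
      rw [simConfig_st_self]
      exact congrArg (committedSt S hh) (toGW_init (Kd := Kd) i)
    · exact (simConfig_st_of_ne hp).trans (toLoc_init (Kd := Kd) hp)
  · rfl

theorem projSys_eq_simConfig (i : I) (s : Config (MC S hh Kd))
    (hq : ∃ q, toGW S hh i (s.st ⟨i, hh i⟩) = Sum.inl q) :
    projSys S hh Kd i s hq = simConfig S hh Kd i s := by
  ext1
  · funext p
    by_cases hp : p = hh i
    · subst hp
      dsimp only [projSys]
      rw [dif_pos rfl, simConfig_st_self, eq_mpr_eq_cast, cast_eq]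
      exact (congrArg (committedSt S hh) hq.choose_spec).symm
    · simp [projSys, simConfig_st_of_ne hp, hp]
  · rfl

end Gateway

end CFSM

open CFSM in
theorem projSys_reachable_general
    {I : Type} {P : I → Type} {A : Type}
    (S : ∀ i, CS (P i) A)
    (hh : ∀ i, P i)
    (CM : Set (I × A × I))
    (Kd : ∀ i, Set ((S i).St (hh i) × Act I A × (S i).St (hh i)))
    (hK : IsConnPolicy S hh CM Kd)
    (s : Config (MC S hh Kd)) (hs : s ∈ RC (MC S hh Kd))
    (i : I) (hq : ∃ q, toGW S hh i (s.st ⟨i, hh i⟩) = Sum.inl q) :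
    projSys S hh Kd i s hq ∈ RC (S i) := by
  rw [projSys_eq_simConfig]
  show Reach _ _ _
  rw [← simConfig_initConfig]
  exact reach_simConfig hK hs

open CFSM in
/-- if in a reachable configuration of the multicomposition the gateway of
`hh i` is not in a fresh intermediate state, then the projection to `S i` is reachable in `S i`. -/
theorem projSys_reachable
    {I : Type} [Finite I] {P : I → Type} [∀ i, Finite (P i)] {A : Type} [Finite A]
    (S : ∀ i, CS (P i) A)
    (hfin : ∀ i p, Finite ((S i).St p))
    (hwf : ∀ i, (S i).WellFormed)
    (hh : ∀ i, P i)
    (CM : Set (I × A × I)) (hCM : IsConnModel S hh CM)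
    (Kd : ∀ i, Set ((S i).St (hh i) × Act I A × (S i).St (hh i)))
    (hK : IsConnPolicy S hh CM Kd)
    (s : Config (MC S hh Kd)) (hs : s ∈ RC (MC S hh Kd))
    (i : I) (hq : ∃ q, toGW S hh i (s.st ⟨i, hh i⟩) = Sum.inl q) :
    projSys S hh Kd i s hq ∈ RC (S i) :=
  projSys_reachable_general S hh CM Kd hK s hs i hq
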